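/- arXiv:2506.17444 — 4 statements merged into one kernel-verified Lean document; each statement's English description precedes it below -/
import Mathlib

section
/- The probability that the origin is a cut-point is strictly positive; that is, P( for all integers i ≥ 1 and j ≥ 1 the edge ⟨−i, j⟩ is closed ) > 0. -/
open MeasureTheory ProbabilityTheory
open scoped ENNReal

private lemma exp_neg_two_mul_le {p : ℝ} (h0 : 0 ≤ p) (h2 : p ≤ 1 / 2) :
    Real.exp (-(2 * p)) ≤ 1 - p := by
  have h1 : (1 : ℝ) + 2 * p ≤ Real.exp (2 * p) := by
    have := Real.add_one_le_exp (2 * p); linarith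
  have hp1 : (0 : ℝ) < 1 + 2 * p := by linarith
  have hinv : (Real.exp (2 * p))⁻¹ ≤ (1 + 2 * p)⁻¹ :=
    inv_anti₀ hp1 h1
  rw [Real.exp_neg]
  refine hinv.trans ?_
  rw [← one_div]
  rw [div_le_iff₀ hp1]
  nlinarith

/-- Long-range percolation on ℤ with edge probabilities `|i-j|^{-s}`, `s > 2`:
the probability that the origin is a cut-point, i.e. that every edge `⟨-i, j⟩` with
`i ≥ 1` and `j ≥ 1` is closed, is strictly positive. -/
theorem origin_cut_point_pos_prob
    (s : ℝ) (hs : 2 < s)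
    {Ω : Type*} [MeasurableSpace Ω] (P : Measure Ω) [IsProbabilityMeasure P]
    (E : ℤ → ℤ → Set Ω)
    (hmeas : ∀ i j : ℤ, MeasurableSet (E i j))
    (hindep : iIndepSet (fun q : {q : ℤ × ℤ // q.1 < q.2} => E q.1.1 q.1.2) P)
    (hprob : ∀ i j : ℤ, i < j → P (E i j) = ENNReal.ofReal ((|(i : ℝ) - j|) ^ (-s))) :
    0 < P {ω | ∀ i j : ℤ, 1 ≤ i → 1 ≤ j → ω ∉ E (-i) j} := by
  classical
  -- index type of edges and the sub-index of relevant edges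
  set ι := {q : ℤ × ℤ // q.1 < q.2} with hιdef
  let K := {q : ι // q.1.1 ≤ -1 ∧ 1 ≤ q.1.2}
  -- the edge probability function
  let g : ℤ × ℤ → ℝ := fun r => if r.1 ≤ -1 ∧ 1 ≤ r.2 then |(r.1 : ℝ) - r.2| ^ (-s) else 0
  -- summability of g
  have hg_nonneg : ∀ r, 0 ≤ g r := by
    intro r
    by_cases h : r.1 ≤ -1 ∧ 1 ≤ r.2
    · simp only [g, if_pos h]; positivity
    · simp only [g, if_neg h]; exact le_refl 0
  have hf1 : Summable (fun n : ℕ => ((n : ℝ) + 1) ^ (-(s / 2))) := by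
    have h := (Real.summable_nat_rpow (p := -(s / 2))).mpr (by linarith)
    have h2 := h.comp_injective Nat.succ_injective
    have : (fun n : ℕ => ((n : ℝ) + 1) ^ (-(s / 2)))
        = (fun n : ℕ => ((n : ℝ)) ^ (-(s / 2))) ∘ Nat.succ := by
      funext n
      simp only [Function.comp, Nat.succ_eq_add_one, Nat.cast_add, Nat.cast_one]
    rw [this]; exact h2
  have hf2 : Summable (fun mn : ℕ × ℕ =>
      ((mn.1 : ℝ) + 1) ^ (-(s / 2)) * ((mn.2 : ℝ) + 1) ^ (-(s / 2))) :=
    hf1.mul_of_nonneg hf1 (fun n => by positivity) (fun n => by positivity)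
  -- embedding of ℕ × ℕ into the support of g
  let e : ℕ × ℕ → ℤ × ℤ := fun mn => (-(mn.1 + 1 : ℤ), (mn.2 + 1 : ℤ))
  have he_inj : Function.Injective e := by
    intro a b h
    have h1 := congrArg Prod.fst h
    have h2 := congrArg Prod.snd h
    simp only [e] at h1 h2
    ext
    · omega
    · omega
  have hg_e : ∀ mn : ℕ × ℕ, g (e mn) = ((mn.1 : ℝ) + (mn.2 : ℝ) + 2) ^ (-s) := by
    rintro ⟨m, n⟩
    have hcond : (-(m + 1 : ℤ) ≤ -1 ∧ (1 : ℤ) ≤ (n + 1 : ℤ)) := by omega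
    simp only [g, e, if_pos hcond]
    congr 1
    push_cast
    have h1 : -((m : ℝ) + 1) - ((n : ℝ) + 1) = -((m : ℝ) + (n : ℝ) + 2) := by ring
    rw [h1, abs_neg, abs_of_nonneg (by positivity)]
  have hkey : ∀ mn : ℕ × ℕ, ((mn.1 : ℝ) + (mn.2 : ℝ) + 2) ^ (-s)
      ≤ ((mn.1 : ℝ) + 1) ^ (-(s / 2)) * ((mn.2 : ℝ) + 1) ^ (-(s / 2)) := by
    rintro ⟨m, n⟩
    have ha : (0 : ℝ) < (m : ℝ) + 1 := by positivity
    have hb : (0 : ℝ) < (n : ℝ) + 1 := by positivity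
    have h1 : ((m : ℝ) + 1) ^ (-(s / 2)) * ((n : ℝ) + 1) ^ (-(s / 2))
        = (((m : ℝ) + 1) * ((n : ℝ) + 1)) ^ (-(s / 2)) :=
      (Real.mul_rpow ha.le hb.le).symm
    have h2 : (((m : ℝ) + 1) * ((n : ℝ) + 1)) ^ (-(s / 2))
        = ((((m : ℝ) + 1) * ((n : ℝ) + 1)) ^ ((1 : ℝ) / 2)) ^ (-s) := by
      rw [← Real.rpow_mul (by positivity)]
      ring_nf
    have h3 : (((m : ℝ) + 1) * ((n : ℝ) + 1)) ^ ((1 : ℝ) / 2)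
        ≤ (m : ℝ) + (n : ℝ) + 2 := by
      rw [← Real.sqrt_eq_rpow]
      have h4 : ((m : ℝ) + 1) * ((n : ℝ) + 1) ≤ ((m : ℝ) + (n : ℝ) + 2) ^ 2 := by nlinarith
      calc Real.sqrt (((m : ℝ) + 1) * ((n : ℝ) + 1))
          ≤ Real.sqrt (((m : ℝ) + (n : ℝ) + 2) ^ 2) := Real.sqrt_le_sqrt h4
        _ = (m : ℝ) + (n : ℝ) + 2 := Real.sqrt_sq (by positivity)
    rw [h1, h2]
    exact Real.rpow_le_rpow_of_nonpos (by positivity) h3 (by linarith)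
  have hge : Summable (fun mn : ℕ × ℕ => g (e mn)) := by
    apply hf2.of_nonneg_of_le (fun mn => hg_nonneg _)
    intro mn
    rw [hg_e mn]
    exact hkey mn
  have hg_vanish : ∀ r ∉ Set.range e, g r = 0 := by
    intro r hr
    by_cases h : r.1 ≤ -1 ∧ 1 ≤ r.2
    · exfalso
      apply hr
      refine ⟨⟨(-r.1 - 1).toNat, (r.2 - 1).toNat⟩, ?_⟩
      have h1 : (-(((-r.1 - 1).toNat : ℤ)) - 1 : ℤ) = r.1 := by omega
      have h2 : (((r.2 - 1).toNat : ℤ) + 1 : ℤ) = r.2 := by omega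
      simp only [e]
      ext
      · simp; omega
      · simp; omega
    · simp only [g, if_neg h]
  have hg_sum : Summable g := (he_inj.summable_iff hg_vanish).mp hge
  -- summability over K
  have hK_inj : Function.Injective (fun q : K => (q.1.1 : ℤ × ℤ)) := by
    intro a b h
    exact Subtype.ext (Subtype.ext h)
  have hK_sum : Summable (fun q : K => g q.1.1) := hg_sum.comp_injective hK_inj
  set S : ℝ := ∑' q : K, g q.1.1 with hSdef
  -- the edge probability for q : K
  let p : K → ℝ := fun q => |(q.1.1.1 : ℝ) - q.1.1.2| ^ (-s)
  have hp_eq : ∀ q : K, g q.1.1 = p q := by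
    intro q
    simp only [g, p, if_pos q.2]
  have hp_nonneg : ∀ q : K, 0 ≤ p q := by intro q; positivity
  have hp_half : ∀ q : K, p q ≤ 1 / 2 := by
    intro q
    obtain ⟨⟨⟨a, b⟩, hab⟩, ha, hb⟩ := q
    simp only [p]
    have ha' : (a : ℝ) ≤ -1 := by exact_mod_cast ha
    have hb' : (1 : ℝ) ≤ (b : ℝ) := by exact_mod_cast hb
    have habs : (2 : ℝ) ≤ |(a : ℝ) - b| := by
      rw [abs_of_nonpos (by linarith)]
      linarith
    calc |(a : ℝ) - b| ^ (-s) ≤ (2 : ℝ) ^ (-s) :=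
          Real.rpow_le_rpow_of_nonpos (by norm_num) habs (by linarith)
      _ ≤ (2 : ℝ) ^ (-1 : ℝ) :=
          Real.rpow_le_rpow_of_exponent_le (by norm_num) (by linarith)
      _ = 1 / 2 := by
          rw [Real.rpow_neg_one]; norm_num
  -- rewrite the event
  have hA : {ω | ∀ i j : ℤ, 1 ≤ i → 1 ≤ j → ω ∉ E (-i) j}
      = ⋂ q : K, (E q.1.1.1 q.1.1.2)ᶜ := by
    ext ω
    simp only [Set.mem_setOf_eq, Set.mem_iInter, Set.mem_compl_iff]
    constructor
    · rintro h ⟨⟨⟨a, b⟩, hab⟩, ha, hb⟩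
      have ha' : a ≤ -1 := ha
      have hb' : (1 : ℤ) ≤ b := hb
      have := h (-a) b (by omega) hb'
      simpa using this
    · intro h i j hi hj
      exact h ⟨⟨(-i, j), by omega⟩, ⟨show -i ≤ -1 by omega, show (1 : ℤ) ≤ j from hj⟩⟩
  -- the finite intersections
  let D : Finset K → Set Ω := fun F => ⋂ q ∈ F, (E q.1.1.1 q.1.1.2)ᶜ
  have hD_anti : ∀ {F G : Finset K}, F ⊆ G → D G ⊆ D F := by
    intro F G hFG ω hω
    simp only [D, Set.mem_iInter] at hω ⊢
    exact fun q hq => hω q (hFG hq)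
  have hDA : ⋂ F : Finset K, D F = ⋂ q : K, (E q.1.1.1 q.1.1.2)ᶜ := by
    apply Set.Subset.antisymm
    · intro ω hω
      simp only [Set.mem_iInter] at hω ⊢
      intro q
      have := hω {q}
      simp only [D, Finset.mem_singleton, Set.iInter_iInter_eq_left] at this
      simpa using this
    · intro ω hω
      simp only [Set.mem_iInter] at hω ⊢
      intro F
      simp only [D, Set.mem_iInter]
      exact fun q _ => hω q
  have hD_meas : ∀ F : Finset K, MeasurableSet (D F) := by
    intro F
    exact MeasurableSet.biInter (F : Set K).to_countable (fun q _ => (hmeas _ _).compl)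
  have hdir : Directed (· ⊇ ·) D := by
    intro F G
    exact ⟨F ∪ G, hD_anti Finset.subset_union_left, hD_anti Finset.subset_union_right⟩
  have hInf : P (⋂ F : Finset K, D F) = ⨅ F : Finset K, P (D F) :=
    Directed.measure_iInter (fun F => (hD_meas F).nullMeasurableSet) hdir
      ⟨∅, measure_ne_top P _⟩
  -- independence: product formula for finite intersections
  have hiind := (iIndepSet_iff_iIndep _ P).1 hindep
  have hprodF : ∀ F : Finset K, P (D F) = ∏ q ∈ F, P ((E q.1.1.1 q.1.1.2)ᶜ) := by
    intro F
    have h1 : D F = ⋂ r ∈ F.image (Subtype.val),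
        ((fun r : ι => (E r.1.1 r.1.2)ᶜ) r) := by
      ext ω
      simp only [D, Set.mem_iInter, Finset.mem_image]
      constructor
      · rintro h r ⟨q, hq, rfl⟩
        exact h q hq
      · intro h q hq
        exact h q.1 ⟨q, hq, rfl⟩
    rw [h1,
      hiind.meas_biInter (fun r _ =>
        (MeasurableSpace.measurableSet_generateFrom (Set.mem_singleton _)).compl),
      Finset.prod_image (fun a _ b _ h => Subtype.val_injective h)]
  -- measure of each complement
  have hcompl : ∀ q : K, P ((E q.1.1.1 q.1.1.2)ᶜ) = ENNReal.ofReal (1 - p q) := by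
    intro q
    rw [prob_compl_eq_one_sub (hmeas _ _), hprob _ _ q.1.2]
    rw [← ENNReal.ofReal_one, ← ENNReal.ofReal_sub _ (hp_nonneg q)]
  -- uniform lower bound on P (D F)
  have hlow : ∀ F : Finset K, ENNReal.ofReal (Real.exp (-(2 * S))) ≤ P (D F) := by
    intro F
    rw [hprodF F]
    have h1 : ∀ q ∈ F, P ((E q.1.1.1 q.1.1.2)ᶜ) = ENNReal.ofReal (1 - p q) :=
      fun q _ => hcompl q
    rw [Finset.prod_congr rfl h1,
      ← ENNReal.ofReal_prod_of_nonneg (fun q _ => by linarith [hp_half q])]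
    apply ENNReal.ofReal_le_ofReal
    have hsum_le : ∑ q ∈ F, p q ≤ S := by
      have h2 : ∑ q ∈ F, p q = ∑ q ∈ F, g q.1.1 :=
        Finset.sum_congr rfl (fun q _ => (hp_eq q).symm)
      rw [h2, hSdef]
      exact Summable.sum_le_tsum F (fun q _ => hg_nonneg _) hK_sum
    calc Real.exp (-(2 * S)) ≤ Real.exp (-(2 * ∑ q ∈ F, p q)) := by
          apply Real.exp_le_exp.mpr; linarith
      _ = ∏ q ∈ F, Real.exp (-(2 * p q)) := by
          rw [← Real.exp_sum]
          congr 1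
          rw [Finset.mul_sum, ← Finset.sum_neg_distrib]
      _ ≤ ∏ q ∈ F, (1 - p q) :=
          Finset.prod_le_prod (fun q _ => (Real.exp_pos _).le)
            (fun q _ => exp_neg_two_mul_le (hp_nonneg q) (hp_half q))
  -- conclusion
  rw [hA, ← hDA, hInf]
  calc (0 : ℝ≥0∞) < ENNReal.ofReal (Real.exp (-(2 * S))) :=
        ENNReal.ofReal_pos.mpr (Real.exp_pos _)
    _ ≤ ⨅ F : Finset K, P (D F) := le_iInf hlow
end

section
/- There exists a constant c₀ > 0, depending only on s (in particular not on L), such that for every positive integer L, every m ≥ 1 and every n ≥ 1, if Y₁, …, Y_m are i.i.d. copies of Y^L, then P( Y₁ + ⋯ + Y_m = −n ) < c₀^m / n^{s−1}. -/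
open MeasureTheory ProbabilityTheory
open scoped ENNReal Classical

/-- `WithBot ℤ` is countable; we endow it with the discrete σ-algebra. -/
instance : MeasurableSpace (WithBot ℤ) := ⊤

/-- The backward exploration variable
`Y^L = sup{ i < 0 : the edge ⟨i,j⟩ is open for some j > 0 with j - i > L }`,
with the convention `sup ∅ = -∞ = ⊥`. -/
noncomputable def backwardExploration {Ω : Type*} (E : ℤ → ℤ → Set Ω) (L : ℕ) (ω : Ω) :
    WithBot ℤ :=
  if (∃ i : ℤ, i < 0 ∧ ∃ j : ℤ, 0 < j ∧ (L : ℤ) < j - i ∧ ω ∈ E i j) then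
    ((sSup {i : ℤ | i < 0 ∧ ∃ j : ℤ, 0 < j ∧ (L : ℤ) < j - i ∧ ω ∈ E i j} : ℤ) : WithBot ℤ)
  else ⊥

/-!
If `Y₁ + ⋯ + Y_m = -n` with all `Yᵢ ≤ 0`, the smallest summand `Yᵢ = -k` has `m k ≥ n`, and the
other summands, which are independent of `Yᵢ`, add up to `k - n`; these events are disjoint in
`k`, so `P(∑ Yᵢ = -n) ≤ m · sup_{m k ≥ n} P(Y^L = -k)`. The event `Y^L = -k` requires an open edge
`⟨-k, j⟩` with `j ≥ 1`, and `∑_{j ≥ 1} (k + j)^{-s} ≤ k^{1-s}` because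
`(a + 1)^{-s} ≤ k^{2-s} (a⁻¹ - (a + 1)⁻¹)` for `a ≥ k` telescopes. Altogether
`P(∑ Yᵢ = -n) ≤ m (n / m)^{1-s} = m^s / n^{s-1} < (2^s)^m / n^{s-1}`.
-/

lemma rpow_neg_add_one_le {s k a : ℝ} (hs : 2 ≤ s) (hk : 0 < k) (hka : k ≤ a) :
    (a + 1) ^ (-s) ≤ k ^ (2 - s) * (a⁻¹ - (a + 1)⁻¹) := by
  have ha : 0 < a := hk.trans_le hka
  have hsplit : (a + 1) ^ (-s) = (a + 1) ^ (2 - s) * ((a + 1) ^ 2)⁻¹ := by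
    rw [← Real.rpow_natCast, ← Real.rpow_neg (by positivity), ← Real.rpow_add (by positivity)]
    congr 1; ring
  have hdiff : a⁻¹ - (a + 1)⁻¹ = (a * (a + 1))⁻¹ := by field_simp; ring
  rw [hsplit, hdiff]
  have hk2 : (a + 1) ^ (2 - s) ≤ k ^ (2 - s) :=
    Real.rpow_le_rpow_of_nonpos hk (by linarith) (by linarith)
  have hsq : ((a + 1) ^ 2)⁻¹ ≤ (a * (a + 1))⁻¹ := by gcongr; nlinarith
  exact mul_le_mul hk2 hsq (by positivity) (by positivity)

lemma tsum_ofReal_rpow_neg_le {s k : ℝ} (hs : 2 ≤ s) (hk : 0 < k) :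
    ∑' t : ℕ, ENNReal.ofReal ((k + t + 1) ^ (-s)) ≤ ENNReal.ofReal (k ^ (1 - s)) := by
  refine ENNReal.tsum_le_of_sum_range_le fun N => ?_
  rw [← ENNReal.ofReal_sum_of_nonneg fun t _ => by positivity]
  refine ENNReal.ofReal_le_ofReal ?_
  have htelescope : ∑ t ∈ Finset.range N, ((k + t)⁻¹ - (k + t + 1)⁻¹) = k⁻¹ - (k + N)⁻¹ := by
    simpa [add_assoc] using Finset.sum_range_sub' (fun t : ℕ => (k + t)⁻¹) N
  calc ∑ t ∈ Finset.range N, (k + t + 1) ^ (-s)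
      ≤ ∑ t ∈ Finset.range N, k ^ (2 - s) * ((k + t)⁻¹ - (k + t + 1)⁻¹) :=
        Finset.sum_le_sum fun t _ => rpow_neg_add_one_le hs hk (by simp)
    _ = k ^ (2 - s) * (k⁻¹ - (k + N)⁻¹) := by rw [← Finset.mul_sum, htelescope]
    _ ≤ k ^ (2 - s) * k⁻¹ := by gcongr; simp only [sub_le_self_iff, inv_nonneg]; positivity
    _ = k ^ (1 - s) := by rw [← Real.rpow_neg_one, ← Real.rpow_add hk]; ring_nf

lemma MeasureTheory.Measure.map_apply_le {α β : Type*} [MeasurableSpace α] [MeasurableSpace β]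
    (μ : Measure α) (f : α → β) {t : Set β} (ht : MeasurableSet t) :
    μ.map f t ≤ μ (f ⁻¹' t) := by
  by_cases hf : AEMeasurable f μ
  · exact (Measure.map_apply_of_aemeasurable hf ht).le
  · simp [Measure.map_of_not_aemeasurable hf]

section BackwardExploration

variable {Ω : Type*} {E : ℤ → ℤ → Set Ω} {L : ℕ}

lemma backwardExploration_eq_coe {ω : Ω} {i : ℤ} (h : backwardExploration E L ω = i) :
    i < 0 ∧ ∃ j : ℤ, 0 < j ∧ (L : ℤ) < j - i ∧ ω ∈ E i j := by
  unfold backwardExploration at h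
  split_ifs at h with hopen
  · rw [← WithBot.coe_inj.mp h]
    exact Int.csSup_mem hopen ⟨0, fun x hx => hx.1.le⟩
  · exact absurd h WithBot.bot_ne_coe

lemma backwardExploration_nonpos (ω : Ω) : backwardExploration E L ω ≤ 0 := by
  cases h : backwardExploration E L ω with
  | bot => exact bot_le
  | coe i => exact WithBot.coe_le_coe.mpr (backwardExploration_eq_coe h).1.le

lemma measure_backwardExploration_eq_neg_le [MeasurableSpace Ω] {P : Measure Ω} {s : ℝ}
    (hs : 2 ≤ s)
    (hprob : ∀ i j : ℤ, i < j → P (E i j) = ENNReal.ofReal ((|(i : ℝ) - j|) ^ (-s)))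
    {k : ℕ} (hk : 0 < k) :
    P (backwardExploration E L ⁻¹' {((-k : ℤ) : WithBot ℤ)}) ≤
      ENNReal.ofReal ((k : ℝ) ^ (1 - s)) := by
  have hcover : backwardExploration E L ⁻¹' {((-k : ℤ) : WithBot ℤ)} ⊆ ⋃ t : ℕ, E (-k) (t + 1) := by
    intro ω hω
    obtain ⟨-, j, hj, -, hω⟩ := backwardExploration_eq_coe hω
    refine Set.mem_iUnion.mpr ⟨(j - 1).toNat, ?_⟩
    rwa [Int.toNat_of_nonneg (by omega), sub_add_cancel]
  have hedge (t : ℕ) : P (E (-k) (t + 1)) = ENNReal.ofReal (((k : ℝ) + t + 1) ^ (-s)) := by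
    rw [hprob _ _ (by omega)]
    congr 2
    rw [abs_of_neg (by push_cast; linarith)]
    push_cast; ring
  calc P (backwardExploration E L ⁻¹' {((-k : ℤ) : WithBot ℤ)})
      ≤ ∑' t : ℕ, P (E (-k) (t + 1)) := (measure_mono hcover).trans (measure_iUnion_le _)
    _ ≤ ENNReal.ofReal ((k : ℝ) ^ (1 - s)) := by
      simp only [hedge]; exact tsum_ofReal_rpow_neg_le hs (by exact_mod_cast hk)

end BackwardExploration

lemma exists_eq_neg_of_sum_eq_neg {ι : Type*} [Fintype ι] [Nonempty ι] [DecidableEq ι]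
    {y : ι → WithBot ℤ} (hy : ∀ i, y i ≤ 0) {n : ℕ} (hsum : ∑ i, y i = ((-n : ℤ) : WithBot ℤ)) :
    ∃ i, ∃ k : ℕ, n ≤ Fintype.card ι * k ∧ y i = ((-k : ℤ) : WithBot ℤ) ∧
      ∑ j ∈ Finset.univ.erase i, y j = ((k - n : ℤ) : WithBot ℤ) := by
  have hfinite (i : ι) : y i ≠ ⊥ := fun hi =>
    WithBot.coe_ne_bot (hsum ▸ WithBot.sum_eq_bot_iff.mpr ⟨i, Finset.mem_univ i, hi⟩ :)
  choose z hz using fun i => WithBot.ne_bot_iff_exists.mp (hfinite i)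
  obtain rfl : y = fun i => (z i : WithBot ℤ) := funext fun i => (hz i).symm
  simp only [← WithBot.coe_sum, WithBot.coe_inj] at hsum ⊢
  obtain ⟨i, -, hmin⟩ := Finset.univ.exists_min_image z Finset.univ_nonempty
  have hzi : z i ≤ 0 := WithBot.coe_le_coe.mp (hy i)
  obtain ⟨k, hk⟩ : ∃ k : ℕ, z i = -k := ⟨(-z i).toNat, by omega⟩
  have hcard : Fintype.card ι • z i ≤ ∑ j, z j :=
    Finset.card_nsmul_le_sum _ _ _ fun j _ => hmin j (Finset.mem_univ j)
  have hrest := Finset.add_sum_erase Finset.univ z (Finset.mem_univ i)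
  refine ⟨i, k, ?_, by rw [hk], by omega⟩
  rw [nsmul_eq_mul, hk, hsum] at hcard
  have : (n : ℤ) ≤ Fintype.card ι * k := by linarith
  exact_mod_cast this

lemma measure_sum_eq_neg_le {Ω ι : Type*} [MeasurableSpace Ω] {μ : Measure Ω}
    [IsProbabilityMeasure μ] [Fintype ι] [Nonempty ι] {Y : ι → Ω → WithBot ℤ}
    (hY : ∀ i, Measurable (Y i)) (hindep : iIndepFun Y μ) (hnonpos : ∀ i, ∀ᵐ ω ∂μ, Y i ω ≤ 0)
    (n : ℕ) {b : ℝ≥0∞}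
    (hb : ∀ i (k : ℕ), n ≤ Fintype.card ι * k → μ (Y i ⁻¹' {((-k : ℤ) : WithBot ℤ)}) ≤ b) :
    μ {ω | ∑ i, Y i ω = ((-n : ℤ) : WithBot ℤ)} ≤ Fintype.card ι * b := by
  let T (i : ι) : Ω → WithBot ℤ := ∑ j ∈ Finset.univ.erase i, Y j
  let K := {k : ℕ // n ≤ Fintype.card ι * k}
  have hT (i : ι) : Measurable (T i) := by fun_prop
  have hTindep (i : ι) : IndepFun (Y i) (T i) μ :=
    (hindep.indepFun_finsetSum_of_notMem hY (Finset.notMem_erase i _)).symm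
  have hcover : {ω | ∑ i, Y i ω = ((-n : ℤ) : WithBot ℤ)} ≤ᵐ[μ]
      ⋃ i, ⋃ k : K, Y i ⁻¹' {((-k : ℤ) : WithBot ℤ)} ∩ T i ⁻¹' {((k - n : ℤ) : WithBot ℤ)} := by
    filter_upwards [ae_all_iff.mpr hnonpos] with ω hω hsum
    obtain ⟨i, k, hk, hi, hrest⟩ := exists_eq_neg_of_sum_eq_neg hω hsum
    exact Set.mem_iUnion₂.mpr ⟨i, ⟨k, hk⟩, hi, by simpa [T, Finset.sum_apply] using hrest⟩
  have hrest_le (i : ι) : ∑' k : K, μ (T i ⁻¹' {((k - n : ℤ) : WithBot ℤ)}) ≤ 1 := by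
    rw [← measure_iUnion _ fun k => hT i (measurableSet_singleton _)]
    · exact prob_le_one
    · intro k l hkl
      refine (Set.disjoint_singleton.mpr fun h => hkl ?_).preimage _
      exact Subtype.ext (by simpa using h)
  calc μ {ω | ∑ i, Y i ω = ((-n : ℤ) : WithBot ℤ)}
      ≤ ∑ i, ∑' k : K,
          μ (Y i ⁻¹' {((-k : ℤ) : WithBot ℤ)} ∩ T i ⁻¹' {((k - n : ℤ) : WithBot ℤ)}) :=
        (measure_mono_ae hcover).trans <| (measure_iUnion_fintype_le _ _).trans <|
          Finset.sum_le_sum fun i _ => measure_iUnion_le _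
    _ = ∑ i, ∑' k : K,
          μ (Y i ⁻¹' {((-k : ℤ) : WithBot ℤ)}) * μ (T i ⁻¹' {((k - n : ℤ) : WithBot ℤ)}) := by
        refine Finset.sum_congr rfl fun i _ => tsum_congr fun k => ?_
        exact (hTindep i).measure_inter_preimage_eq_mul _ _
          (measurableSet_singleton _) (measurableSet_singleton _)
    _ ≤ ∑ i, b * ∑' k : K, μ (T i ⁻¹' {((k - n : ℤ) : WithBot ℤ)}) := by
        simp only [← ENNReal.tsum_mul_left]
        gcongr with i _ k
        exact hb i k k.2
    _ ≤ ∑ _i : ι, b := by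
        gcongr with i
        exact mul_le_of_le_one_right' (hrest_le i)
    _ = Fintype.card ι * b := by simp

lemma mul_div_rpow_one_sub_eq {m n s : ℝ} (hm : 0 < m) (hn : 0 < n) :
    m * (n / m) ^ (1 - s) = m ^ s / n ^ (s - 1) := by
  rw [show 1 - s = -(s - 1) by ring, Real.rpow_neg (by positivity), Real.div_rpow hn.le hm.le,
    Real.rpow_sub_one hm.ne']
  field_simp

lemma natCast_rpow_lt_two_rpow_pow {s : ℝ} (hs : 0 < s) (m : ℕ) : (m : ℝ) ^ s < (2 ^ s) ^ m := by
  rw [← Real.rpow_mul_natCast zero_le_two, mul_comm, Real.rpow_natCast_mul zero_le_two]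
  exact Real.rpow_lt_rpow m.cast_nonneg (by exact_mod_cast Nat.lt_two_pow_self) hs

theorem backwardExploration_sum_bound_general
    (s : ℝ) (hs : 2 < s)
    {Ω : Type*} [MeasurableSpace Ω] (P : Measure Ω)
    (E : ℤ → ℤ → Set Ω)
    (hprob : ∀ i j : ℤ, i < j → P (E i j) = ENNReal.ofReal ((|(i : ℝ) - j|) ^ (-s))) :
    ∃ c₀ : ℝ, 0 < c₀ ∧ ∀ L : ℕ, 1 ≤ L → ∀ m : ℕ, 1 ≤ m → ∀ n : ℕ, 1 ≤ n →
      ∀ (Ω' : Type) (_ : MeasurableSpace Ω') (P' : Measure Ω'),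
        IsProbabilityMeasure P' →
        ∀ Y : Fin m → Ω' → WithBot ℤ,
          (∀ i, Measurable (Y i)) →
          iIndepFun (m := fun _ : Fin m => (inferInstance : MeasurableSpace (WithBot ℤ))) Y P' →
          (∀ i, P'.map (Y i) = P.map (backwardExploration E L)) →
          P' {ω' | (∑ i, Y i ω') = ((-(n : ℤ) : ℤ) : WithBot ℤ)}
            < ENNReal.ofReal (c₀ ^ m / (n : ℝ) ^ (s - 1)) := by
  refine ⟨2 ^ s, by positivity, fun L _ m hm n hn Ω' _ P' _ Y hY hindep hlaw => ?_⟩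
  have : Nonempty (Fin m) := ⟨⟨0, hm⟩⟩
  have hm' : (0 : ℝ) < m := by exact_mod_cast hm
  have hn' : (0 : ℝ) < n := by exact_mod_cast hn
  have hlaw_le (i : Fin m) (t : Set (WithBot ℤ)) :
      P' (Y i ⁻¹' t) ≤ P (backwardExploration E L ⁻¹' t) := by
    rw [← Measure.map_apply (hY i) (.of_discrete), hlaw i]
    exact Measure.map_apply_le _ _ (.of_discrete)
  have hnonpos (i : Fin m) : ∀ᵐ ω ∂P', Y i ω ≤ 0 := by
    refine ae_iff.mpr (le_zero_iff.mp ((hlaw_le i {y | ¬y ≤ 0}).trans ?_))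
    simp [(backwardExploration_nonpos _).not_gt]
  have hmarginal (i : Fin m) (k : ℕ) (hk : n ≤ Fintype.card (Fin m) * k) :
      P' (Y i ⁻¹' {((-k : ℤ) : WithBot ℤ)}) ≤ ENNReal.ofReal (((n : ℝ) / m) ^ (1 - s)) := by
    rw [Fintype.card_fin] at hk
    have hk' : (n : ℝ) / m ≤ k := by rw [div_le_iff₀' hm']; exact_mod_cast hk
    refine (hlaw_le i _).trans ((measure_backwardExploration_eq_neg_le hs.le hprob ?_).trans ?_)
    · exact Nat.pos_of_ne_zero (by rintro rfl; omega)
    · exact ENNReal.ofReal_le_ofReal (Real.rpow_le_rpow_of_nonpos (by positivity) hk' (by linarith))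
  calc P' {ω' | (∑ i, Y i ω') = ((-(n : ℤ) : ℤ) : WithBot ℤ)}
      ≤ m * ENNReal.ofReal (((n : ℝ) / m) ^ (1 - s)) := by
        simpa using measure_sum_eq_neg_le hY hindep hnonpos n hmarginal
    _ = ENNReal.ofReal ((m : ℝ) ^ s / (n : ℝ) ^ (s - 1)) := by
        rw [← ENNReal.ofReal_natCast, ← ENNReal.ofReal_mul m.cast_nonneg,
          mul_div_rpow_one_sub_eq hm' hn']
    _ < ENNReal.ofReal ((2 ^ s) ^ m / (n : ℝ) ^ (s - 1)) := by
        rw [ENNReal.ofReal_lt_ofReal_iff (by positivity)]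
        gcongr
        exact natCast_rpow_lt_two_rpow_pow (by linarith) m

/-- Long-range percolation on ℤ with edge probabilities `|i-j|^{-s}`,
`s > 2`: there is a constant `c₀ > 0` depending only on `s` (in particular not on `L`)
such that for every positive integer `L`, every `m ≥ 1` and every `n ≥ 1`, if
`Y₁, …, Y_m` are i.i.d. copies of `Y^L` then `P(Y₁ + ⋯ + Y_m = -n) < c₀^m / n^{s-1}`. -/
theorem backwardExploration_sum_bound
    (s : ℝ) (hs : 2 < s)
    {Ω : Type*} [MeasurableSpace Ω] (P : Measure Ω) [IsProbabilityMeasure P]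
    (E : ℤ → ℤ → Set Ω)
    (hmeas : ∀ i j : ℤ, MeasurableSet (E i j))
    (hindep : iIndepSet (fun q : {q : ℤ × ℤ // q.1 < q.2} => E q.1.1 q.1.2) P)
    (hprob : ∀ i j : ℤ, i < j → P (E i j) = ENNReal.ofReal ((|(i : ℝ) - j|) ^ (-s))) :
    ∃ c₀ : ℝ, 0 < c₀ ∧ ∀ L : ℕ, 1 ≤ L → ∀ m : ℕ, 1 ≤ m → ∀ n : ℕ, 1 ≤ n →
      ∀ (Ω' : Type) (_ : MeasurableSpace Ω') (P' : Measure Ω'),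
        IsProbabilityMeasure P' →
        ∀ Y : Fin m → Ω' → WithBot ℤ,
          (∀ i, Measurable (Y i)) →
          iIndepFun (m := fun _ : Fin m => (inferInstance : MeasurableSpace (WithBot ℤ))) Y P' →
          (∀ i, P'.map (Y i) = P.map (backwardExploration E L)) →
          P' {ω' | (∑ i, Y i ω') = ((-(n : ℤ) : ℤ) : WithBot ℤ)}
            < ENNReal.ofReal (c₀ ^ m / (n : ℝ) ^ (s - 1)) :=
  backwardExploration_sum_bound_general s hs P E hprob
end

section
/- For M a positive integer, let N_M denote the number of open edges ⟨x,y⟩ with min(x,y) ∈ {1, …, M}. Then for every α > 0 there exists M₀ (depending on s and α) such that for all M ≥ M₀, P( N_M ≥ 2 M^{1+α} ) ≤ M^{−(1 + 3α/2)}. -/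
open MeasureTheory ProbabilityTheory
open scoped ENNReal

/-- The number (in `ℕ∞`) of open edges `⟨x,y⟩` with `min(x,y) ∈ {1,…,M}`; edges are
recorded as pairs `(x,y)` with `x < y`, so the condition reads `1 ≤ x ≤ M`. -/
noncomputable def edgeCountBox {Ω : Type*} (E : ℤ → ℤ → Set Ω) (M : ℕ) (ω : Ω) : ℕ∞ :=
  {q : ℤ × ℤ | 1 ≤ q.1 ∧ q.1 ≤ (M : ℤ) ∧ q.1 < q.2 ∧ ω ∈ E q.1 q.2}.encard

/-!
Split the edges counted by `N_M` at length `R ≈ 4 M^{2+3α/2}`. Some edge longer than `R` is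
open with probability at most `∑_{x ≤ M} ∑_{d > R} d^{-s} ≤ 2M/R`, half the target bound. The
shorter edges form a finite family of independent Bernoulli variables whose count has mean and
variance at most `2M ≤ M^{1+α}` (as `∑ d^{-s} ≤ ∑ d^{-2} ≤ 2`), so by Chebyshev it reaches
`2M^{1+α}` with probability at most `2M / M^{2+2α}`, again half the target once `M^{α/2} ≥ 4`.
-/

open Finset

section Chebyshev

variable {Ω ι : Type*} [MeasurableSpace Ω] {P : Measure Ω} [IsProbabilityMeasure P]

lemma variance_indicator_one_le {A : Set Ω} (hA : MeasurableSet A) :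
    Var[A.indicator (1 : Ω → ℝ); P] ≤ P.real A := by
  have hsq : A.indicator (1 : Ω → ℝ) ^ 2 = A.indicator 1 := by
    funext ω
    by_cases h : ω ∈ A <;> simp [h]
  calc Var[A.indicator (1 : Ω → ℝ); P] ≤ P[A.indicator 1 ^ 2] :=
        variance_le_expectation_sq (measurable_one.indicator hA).aestronglyMeasurable
    _ = P.real A := by rw [hsq, integral_indicator_one hA]

open scoped Classical in
theorem ProbabilityTheory.iIndepSet.measure_sum_add_le_card_le {A : ι → Set Ω}
    (hind : iIndepSet A P) (hA : ∀ i, MeasurableSet (A i)) (F : Finset ι) {c : ℝ} (hc : 0 < c) :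
    P {ω | ∑ i ∈ F, P.real (A i) + c ≤ #{i ∈ F | ω ∈ A i}}
      ≤ ENNReal.ofReal ((∑ i ∈ F, P.real (A i)) / c ^ 2) := by
  set X : ι → Ω → ℝ := fun i => (A i).indicator 1
  have hX : ∀ i, MemLp (X i) 2 P := fun i =>
    memLp_indicator_const 2 (hA i) 1 (Or.inr (measure_ne_top P _))
  have hcount : ∀ ω, (∑ i ∈ F, X i) ω = #{i ∈ F | ω ∈ A i} := by
    intro ω
    simp only [X, Finset.sum_apply, Set.indicator_apply, Pi.one_apply]
    rw [sum_boole]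
  have hmean : P[∑ i ∈ F, X i] = ∑ i ∈ F, P.real (A i) := by
    simp only [Finset.sum_apply]
    rw [integral_finsetSum _ fun i _ => (hX i).integrable one_le_two]
    exact sum_congr rfl fun i _ => integral_indicator_one (hA i)
  have hvar : Var[∑ i ∈ F, X i; P] ≤ ∑ i ∈ F, P.real (A i) := by
    rw [IndepFun.variance_sum (fun i _ => hX i)
      (fun i _ j _ hij => hind.iIndepFun_indicator.indepFun hij)]
    exact sum_le_sum fun i _ => variance_indicator_one_le (hA i)
  calc _ ≤ P {ω | c ≤ |(∑ i ∈ F, X i) ω - P[∑ i ∈ F, X i]|} := by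
        refine measure_mono fun ω hω => ?_
        rw [Set.mem_ofPred] at hω
        change c ≤ |_|
        rw [hmean, hcount]
        exact le_abs.2 (Or.inl (by linarith))
    _ ≤ ENNReal.ofReal (Var[∑ i ∈ F, X i; P] / c ^ 2) :=
        meas_ge_le_variance_div_sq (memLp_finsetSum' _ fun i _ => hX i) hc
    _ ≤ _ := ENNReal.ofReal_le_ofReal (div_le_div_of_nonneg_right hvar (sq_nonneg c))

end Chebyshev

lemma rpow_neg_le_inv_sq {s x : ℝ} (hs : 2 ≤ s) (hx : 1 ≤ x) : x ^ (-s) ≤ (x ^ 2)⁻¹ := by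
  calc x ^ (-s) ≤ x ^ (-2 : ℝ) := Real.rpow_le_rpow_of_exponent_le hx (by linarith)
    _ = (x ^ 2)⁻¹ := by rw [Real.rpow_neg (by linarith), Real.rpow_two]

lemma sum_range_rpow_neg_le {s : ℝ} (hs : 2 ≤ s) (k n : ℕ) :
    ∑ d ∈ range n, ((k + d + 1 : ℕ) : ℝ) ^ (-s) ≤ 2 / (k + 1) := by
  have hshift := sum_Ico_eq_sum_range (fun i : ℕ => (i : ℝ) ^ (-s)) (k + 1) (k + 1 + n)
  rw [Nat.add_sub_cancel_left, Ico_add_one_left_eq_Ioo] at hshift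
  calc ∑ d ∈ range n, ((k + d + 1 : ℕ) : ℝ) ^ (-s)
      = ∑ i ∈ Ioo k (k + 1 + n), (i : ℝ) ^ (-s) := by
        rw [hshift]
        exact sum_congr rfl fun d _ => by ring_nf
    _ ≤ ∑ i ∈ Ioo k (k + 1 + n), ((i : ℝ) ^ 2)⁻¹ := sum_le_sum fun i hi =>
        rpow_neg_le_inv_sq hs (Nat.one_le_cast.2 (Nat.one_le_of_lt (mem_Ioo.1 hi).1))
    _ ≤ 2 / (k + 1) := sum_Ioo_inv_sq_le k _

section Percolation

variable {Ω : Type*} {E : ℤ → ℤ → Set Ω}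

def edgeAt : ℤ × ℕ ↪ {q : ℤ × ℤ // q.1 < q.2} where
  toFun p := ⟨(p.1, p.1 + p.2 + 1), by omega⟩
  inj' := by
    rintro ⟨x, d⟩ ⟨y, e⟩ h
    simp only [Subtype.mk.injEq, Prod.mk.injEq] at h
    obtain ⟨rfl, h⟩ := h
    simp only [Prod.mk.injEq, true_and]
    omega

@[simp]
lemma coe_edgeAt (p : ℤ × ℕ) : (edgeAt p : ℤ × ℤ) = (p.1, p.1 + p.2 + 1) := rfl

noncomputable def nearEdges (M R : ℕ) : Finset {q : ℤ × ℤ // q.1 < q.2} :=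
  (Icc (1 : ℤ) M ×ˢ range R).map edgeAt

def farEdgeEvent (E : ℤ → ℤ → Set Ω) (M R : ℕ) : Set Ω :=
  ⋃ x ∈ Icc (1 : ℤ) M, ⋃ d : ℕ, E x (x + (R + d : ℕ) + 1)

open scoped Classical in
lemma edgeCountBox_le_card_nearEdges {M R : ℕ} {ω : Ω} (hω : ω ∉ farEdgeEvent E M R) :
    edgeCountBox E M ω ≤ #{q ∈ nearEdges M R | ω ∈ E q.1.1 q.1.2} := by
  rw [edgeCountBox, ← Set.encard_coe_eq_coe_finsetCard,
    ← Subtype.val_injective.encard_image]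
  refine Set.encard_mono ?_
  rintro ⟨x, y⟩ ⟨hx1, hxM, hxy, hωxy⟩
  have hyR : y ≤ x + R := by
    by_contra! hy
    refine hω (Set.mem_biUnion (mem_Icc.2 ⟨hx1, hxM⟩)
      (Set.mem_iUnion.2 ⟨(y - x - R - 1).toNat, ?_⟩))
    convert hωxy using 2
    omega
  refine ⟨⟨(x, y), hxy⟩, ?_, rfl⟩
  simp only [coe_filter, nearEdges, mem_map, mem_product, mem_Icc, mem_range]
  refine ⟨⟨(x, (y - x - 1).toNat), ⟨⟨hx1, hxM⟩, by omega⟩, ?_⟩, hωxy⟩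
  exact Subtype.ext (Prod.ext rfl (by simp only [coe_edgeAt]; omega))

variable [MeasurableSpace Ω] {P : Measure Ω} {s : ℝ}

lemma measure_edge_add
    (hprob : ∀ i j : ℤ, i < j → P (E i j) = ENNReal.ofReal ((|(i : ℝ) - j|) ^ (-s)))
    (x : ℤ) (n : ℕ) : P (E x (x + n + 1)) = ENNReal.ofReal (((n + 1 : ℕ) : ℝ) ^ (-s)) := by
  rw [hprob _ _ (by omega)]
  congr 2
  rw [abs_sub_comm, abs_of_nonneg (by push_cast; linarith)]
  push_cast
  ring

lemma measureReal_edge_add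
    (hprob : ∀ i j : ℤ, i < j → P (E i j) = ENNReal.ofReal ((|(i : ℝ) - j|) ^ (-s)))
    (x : ℤ) (n : ℕ) : P.real (E x (x + n + 1)) = ((n + 1 : ℕ) : ℝ) ^ (-s) := by
  rw [measureReal_def, measure_edge_add hprob, ENNReal.toReal_ofReal (by positivity)]

lemma sum_nearEdges_measureReal_le (hs : 2 ≤ s)
    (hprob : ∀ i j : ℤ, i < j → P (E i j) = ENNReal.ofReal ((|(i : ℝ) - j|) ^ (-s)))
    (M R : ℕ) : ∑ q ∈ nearEdges M R, P.real (E q.1.1 q.1.2) ≤ 2 * M := by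
  rw [nearEdges, sum_map, sum_product]
  calc _ ≤ ∑ _x ∈ Icc (1 : ℤ) M, (2 : ℝ) := sum_le_sum fun x _ => by
          simpa [measureReal_edge_add hprob] using sum_range_rpow_neg_le hs 0 R
    _ = 2 * M := by simp [mul_comm]

lemma measure_farEdgeEvent_le (hs : 2 ≤ s)
    (hprob : ∀ i j : ℤ, i < j → P (E i j) = ENNReal.ofReal ((|(i : ℝ) - j|) ^ (-s)))
    (M R : ℕ) : P (farEdgeEvent E M R) ≤ ENNReal.ofReal (2 * M / (R + 1)) := by
  calc P (farEdgeEvent E M R)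
      ≤ ∑ x ∈ Icc (1 : ℤ) M, ∑' d : ℕ, P (E x (x + (R + d : ℕ) + 1)) :=
        (measure_biUnion_finset_le _ _).trans (sum_le_sum fun x _ => measure_iUnion_le _)
    _ ≤ ∑ _x ∈ Icc (1 : ℤ) M, ENNReal.ofReal (2 / (R + 1)) :=
        sum_le_sum fun x _ => ENNReal.tsum_le_of_sum_range_le fun n => by
          simp_rw [measure_edge_add hprob]
          rw [← ENNReal.ofReal_sum_of_nonneg fun _ _ => by positivity]
          exact ENNReal.ofReal_le_ofReal (sum_range_rpow_neg_le hs R n)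
    _ = ENNReal.ofReal (2 * M / (R + 1)) := by
        rw [sum_const, Int.card_Icc, nsmul_eq_mul, ← ENNReal.ofReal_natCast,
          ← ENNReal.ofReal_mul (by positivity)]
        congr 1
        simp only [add_sub_cancel_right, Int.toNat_natCast]
        ring

open scoped Classical in
lemma setOf_le_edgeCountBox_subset {M R : ℕ} {c : ℝ}
    (hmean : ∑ q ∈ nearEdges M R, P.real (E q.1.1 q.1.2) ≤ c) :
    {ω | ENNReal.ofReal (2 * c) ≤ ((edgeCountBox E M ω : ℝ≥0∞))} ⊆ farEdgeEvent E M R ∪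
      {ω | ∑ q ∈ nearEdges M R, P.real (E q.1.1 q.1.2) + c
        ≤ #{q ∈ nearEdges M R | ω ∈ E q.1.1 q.1.2}} := by
  intro ω hω
  by_cases hfar : ω ∈ farEdgeEvent E M R
  · exact Or.inl hfar
  have hN := hω.trans (ENat.toENNReal_le.2 (edgeCountBox_le_card_nearEdges hfar))
  rw [ENat.toENNReal_coe, ENNReal.ofReal_le_natCast] at hN
  exact Or.inr (show _ + c ≤ _ by linarith)

end Percolation

section Exponents

variable {x α : ℝ}

lemma two_mul_le_rpow_one_add (hx : 1 ≤ x) (hα : 0 ≤ α) (h4 : 4 ≤ x ^ (α / 2)) :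
    2 * x ≤ x ^ (1 + α) := by
  have : x ^ (α / 2) ≤ x ^ α := Real.rpow_le_rpow_of_exponent_le hx (by linarith)
  rw [Real.rpow_add (by linarith), Real.rpow_one]
  nlinarith

lemma two_mul_div_rpow_sq_le (hx : 1 ≤ x) (h4 : 4 ≤ x ^ (α / 2)) :
    2 * x / (x ^ (1 + α)) ^ 2 ≤ x ^ (-(1 + 3 * α / 2)) / 2 := by
  have hx0 : 0 < x := by linarith
  have hlhs : 2 * x / (x ^ (1 + α)) ^ 2 = 2 * x ^ (-(1 + 2 * α)) := by
    rw [← Real.rpow_natCast, ← Real.rpow_mul hx0.le,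
      show -(1 + 2 * α) = 1 - (1 + α) * (2 : ℕ) by push_cast; ring, Real.rpow_sub hx0,
      Real.rpow_one]
    ring
  have hrhs : x ^ (-(1 + 3 * α / 2)) = x ^ (α / 2) * x ^ (-(1 + 2 * α)) := by
    rw [← Real.rpow_add hx0]; ring_nf
  rw [hlhs, hrhs]
  nlinarith [Real.rpow_pos_of_pos hx0 (-(1 + 2 * α))]

lemma two_mul_div_add_one_le (hx : 1 ≤ x) {R : ℝ} (hR : 4 * x ^ (2 + 3 * α / 2) ≤ R) :
    2 * x / (R + 1) ≤ x ^ (-(1 + 3 * α / 2)) / 2 := by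
  have hx0 : 0 < x := by linarith
  have hpos : 0 < x ^ (2 + 3 * α / 2) := Real.rpow_pos_of_pos hx0 _
  calc 2 * x / (R + 1) ≤ 2 * x / (4 * x ^ (2 + 3 * α / 2)) :=
        div_le_div_of_nonneg_left (by positivity) (by positivity) (by linarith)
    _ = x ^ (-(1 + 3 * α / 2)) / 2 := by
        rw [show -(1 + 3 * α / 2) = 1 - (2 + 3 * α / 2) by ring, Real.rpow_sub hx0, Real.rpow_one]
        field_simp
        ring

end Exponents

/-- Long-range percolation on ℤ with edge probabilities `|i-j|^{-s}`,
`s > 2`: for every `α > 0` there exists `M₀` (depending on `s` and `α`) such that for all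
`M ≥ M₀`, `P(N_M ≥ 2 M^{1+α}) ≤ M^{-(1 + 3α/2)}`. -/
theorem edgeCountBox_deviation
    (s : ℝ) (hs : 2 < s)
    {Ω : Type*} [MeasurableSpace Ω] (P : Measure Ω) [IsProbabilityMeasure P]
    (E : ℤ → ℤ → Set Ω)
    (hmeas : ∀ i j : ℤ, MeasurableSet (E i j))
    (hindep : iIndepSet (fun q : {q : ℤ × ℤ // q.1 < q.2} => E q.1.1 q.1.2) P)
    (hprob : ∀ i j : ℤ, i < j → P (E i j) = ENNReal.ofReal ((|(i : ℝ) - j|) ^ (-s))) :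
    ∀ α : ℝ, 0 < α → ∃ M₀ : ℕ, ∀ M : ℕ, M₀ ≤ M →
      P {ω | ENNReal.ofReal (2 * (M : ℝ) ^ (1 + α)) ≤ ((edgeCountBox E M ω : ℝ≥0∞))}
        ≤ ENNReal.ofReal ((M : ℝ) ^ (-(1 + 3 * α / 2))) := by
  classical
  intro α hα
  obtain ⟨M₀, hM₀⟩ := Filter.eventually_atTop.1 <| (Filter.eventually_ge_atTop 1).and <|
    ((tendsto_rpow_atTop (half_pos hα)).comp tendsto_natCast_atTop_atTop).eventually_ge_atTop 4
  refine ⟨M₀, fun M hM => ?_⟩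
  obtain ⟨hM1, hM4 : (4 : ℝ) ≤ (M : ℝ) ^ (α / 2)⟩ := hM₀ M hM
  replace hM1 : (1 : ℝ) ≤ M := by exact_mod_cast hM1
  set R := ⌈4 * (M : ℝ) ^ (2 + 3 * α / 2)⌉₊
  set c := (M : ℝ) ^ (1 + α)
  set mean := ∑ q ∈ nearEdges M R, P.real (E q.1.1 q.1.2)
  have hmean : mean ≤ c := (sum_nearEdges_measureReal_le hs.le hprob M R).trans
    (two_mul_le_rpow_one_add hM1 hα.le hM4)
  calc _ ≤ P (farEdgeEvent E M R) + P {ω | mean + c ≤ #{q ∈ nearEdges M R | ω ∈ E q.1.1 q.1.2}} :=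
        (measure_mono (setOf_le_edgeCountBox_subset hmean)).trans (measure_union_le _ _)
    _ ≤ ENNReal.ofReal (2 * M / (R + 1)) + ENNReal.ofReal (mean / c ^ 2) :=
        add_le_add (measure_farEdgeEvent_le hs.le hprob M R)
          (hindep.measure_sum_add_le_card_le (fun _ => hmeas _ _) _ (by positivity))
    _ ≤ ENNReal.ofReal ((M : ℝ) ^ (-(1 + 3 * α / 2)) / 2)
          + ENNReal.ofReal ((M : ℝ) ^ (-(1 + 3 * α / 2)) / 2) := by
        refine add_le_add (ENNReal.ofReal_le_ofReal ?_) (ENNReal.ofReal_le_ofReal ?_)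
        · exact two_mul_div_add_one_le hM1 (Nat.le_ceil _)
        · exact (div_le_div_of_nonneg_right (sum_nearEdges_measureReal_le hs.le hprob M R)
            (sq_nonneg c)).trans (two_mul_div_rpow_sq_le hM1 hM4)
    _ = ENNReal.ofReal ((M : ℝ) ^ (-(1 + 3 * α / 2))) := by
        rw [← ENNReal.ofReal_add (by positivity) (by positivity), add_halves]
end

section
/- Let X and Y be nonnegative random variables on a common probability space, let δ > α > 0, set ε := (1+δ)/(1+α) − 1 > 0, and let β > 1. Assume E[X^{1+δ}] < ∞ and that there exists n₀ such that for all integers n ≥ n₀, P( Y ≥ 2 n^{1/(1+ε)} and X < n^{1/(1+δ)} ) ≤ n^{−β}. Then E[Y^{1+ε}] < ∞. -/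
/-!
Write `p = 1 + ε` and `q = 1 + δ`. The discrete layer-cake bound gives
`E[(Y/2)^p] ≤ ∑ₙ P((Y/2)^p > n)`. On the event `(Y/2)^p > n` we have `Y > 2 n^{1/p}`, so either
`X < n^{1/q}`, an event of probability at most `n^{-β}` for large `n`, summable since `β > 1`, or
`X^q ≥ n`, and `∑ₙ P(X^q ≥ n) ≤ E[X^q] + 1`.
-/

open MeasureTheory Filter
open scoped ENNReal

theorem ENNReal.tsum_ne_top_of_eventually_le {f g : ℕ → ℝ≥0∞} (hf : ∀ n, f n ≠ ∞)
    (hfg : ∀ᶠ n in atTop, f n ≤ g n) (hg : ∑' n, g n ≠ ∞) : ∑' n, f n ≠ ∞ := by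
  obtain ⟨N, hN⟩ := eventually_atTop.mp hfg
  rw [← ENNReal.summable.sum_add_tsum_nat_add' (k := N)]
  refine ENNReal.add_ne_top.mpr ⟨ENNReal.sum_ne_top.mpr fun n _ => hf n, ne_top_of_le_ne_top hg ?_⟩
  calc ∑' n, f (n + N) ≤ ∑' n, g (n + N) := ENNReal.tsum_le_tsum fun n => hN _ (Nat.le_add_left N n)
    _ ≤ ∑' n, g n := ENNReal.tsum_comp_le_tsum_of_injective (add_left_injective N) g

theorem tsum_ofReal_natCast_rpow_neg_ne_top {β : ℝ} (hβ : 1 < β) :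
    ∑' n : ℕ, ENNReal.ofReal ((n : ℝ) ^ (-β)) ≠ ∞ := by
  rw [← ENNReal.ofReal_tsum_of_nonneg (fun n => by positivity)
    (Real.summable_nat_rpow.mpr (neg_lt_neg hβ))]
  exact ENNReal.ofReal_ne_top

theorem ENNReal.ofReal_le_tsum_indicator_Ioi (x : ℝ) :
    ENNReal.ofReal x ≤ ∑' n : ℕ, (Set.Ioi (n : ℝ)).indicator 1 x := by
  calc ENNReal.ofReal x ≤ (⌈x⌉₊ : ℝ≥0∞) := by
        simpa using ENNReal.ofReal_le_ofReal (Nat.le_ceil x)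
    _ = ∑ n ∈ Finset.range ⌈x⌉₊, (Set.Ioi (n : ℝ)).indicator 1 x := by
        rw [Finset.sum_congr rfl fun n hn =>
          Set.indicator_of_mem (Set.mem_Ioi.mpr (Nat.lt_ceil.mp (Finset.mem_range.mp hn))) 1]
        simp
    _ ≤ _ := ENNReal.sum_le_tsum _

theorem ENNReal.tsum_indicator_Ici_le_ofReal_add_one (x : ℝ) :
    ∑' n : ℕ, (Set.Ici (n : ℝ)).indicator 1 x ≤ ENNReal.ofReal x + 1 := by
  calc ∑' n : ℕ, (Set.Ici (n : ℝ)).indicator (1 : ℝ → ℝ≥0∞) x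
      = ∑ n ∈ Finset.range (⌊x⌋₊ + 1), (Set.Ici (n : ℝ)).indicator 1 x := by
        refine tsum_eq_sum fun n hn => Set.indicator_of_notMem (fun h => hn ?_) _
        exact Finset.mem_range_succ_iff.mpr (Nat.le_floor h)
    _ ≤ ((⌊x⌋₊ + 1 : ℕ) : ℝ≥0∞) := by
        simpa using Finset.sum_le_card_nsmul (Finset.range (⌊x⌋₊ + 1))
          (fun n : ℕ => (Set.Ici (n : ℝ)).indicator (1 : ℝ → ℝ≥0∞) x) 1 fun n _ =>
          Set.indicator_le_self' (fun _ _ => zero_le) x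
    _ ≤ ENNReal.ofReal x + 1 := by
        push_cast
        gcongr
        rcases le_or_gt 0 x with hx | hx
        · simpa using ENNReal.ofReal_le_ofReal (Nat.floor_le hx)
        · simp [Nat.floor_of_nonpos hx.le]

section LayerCake

variable {α : Type*} [MeasurableSpace α] (μ : Measure α) {f : α → ℝ}

theorem tsum_measure_preimage_eq_lintegral_tsum_indicator (hf : Measurable f) {s : ℕ → Set ℝ}
    (hs : ∀ n, MeasurableSet (s n)) :
    ∑' n, μ (f ⁻¹' s n) = ∫⁻ a, ∑' n, (s n).indicator 1 (f a) ∂μ := by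
  rw [lintegral_tsum (f := fun n a => (s n).indicator 1 (f a))
    fun n => ((measurable_one.indicator (hs n)).comp hf).aemeasurable]
  exact tsum_congr fun n => (lintegral_indicator_one (hf (hs n))).symm

theorem lintegral_ofReal_le_tsum_measure_lt (hf : Measurable f) :
    ∫⁻ a, ENNReal.ofReal (f a) ∂μ ≤ ∑' n : ℕ, μ {a | (n : ℝ) < f a} :=
  calc ∫⁻ a, ENNReal.ofReal (f a) ∂μ
      ≤ ∫⁻ a, ∑' n : ℕ, (Set.Ioi (n : ℝ)).indicator 1 (f a) ∂μ :=
        lintegral_mono fun a => ENNReal.ofReal_le_tsum_indicator_Ioi (f a)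
    _ = ∑' n : ℕ, μ {a | (n : ℝ) < f a} :=
        (tsum_measure_preimage_eq_lintegral_tsum_indicator μ hf fun _ => measurableSet_Ioi).symm

theorem tsum_measure_le_le_lintegral_ofReal_add (hf : Measurable f) :
    ∑' n : ℕ, μ {a | (n : ℝ) ≤ f a} ≤ ∫⁻ a, ENNReal.ofReal (f a) ∂μ + μ Set.univ :=
  calc ∑' n : ℕ, μ {a | (n : ℝ) ≤ f a}
      = ∫⁻ a, ∑' n : ℕ, (Set.Ici (n : ℝ)).indicator 1 (f a) ∂μ :=
        tsum_measure_preimage_eq_lintegral_tsum_indicator μ hf fun _ => measurableSet_Ici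
    _ ≤ ∫⁻ a, (ENNReal.ofReal (f a) + 1) ∂μ :=
        lintegral_mono fun a => ENNReal.tsum_indicator_Ici_le_ofReal_add_one (f a)
    _ = ∫⁻ a, ENNReal.ofReal (f a) ∂μ + μ Set.univ := by
        rw [lintegral_add_right _ measurable_const, lintegral_const, one_mul]

end LayerCake

theorem setOf_lt_half_rpow_subset_union {Ω : Type*} (X Y : Ω → ℝ) (hY : ∀ ω, 0 ≤ Y ω)
    {p q t : ℝ} (hp : 0 < p) (hq : 0 < q) (ht : 0 ≤ t) :
    {ω | t < (Y ω / 2) ^ p} ⊆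
      {ω | 2 * t ^ (1 / p) ≤ Y ω ∧ X ω < t ^ (1 / q)} ∪ {ω | t ≤ X ω ^ q} := by
  intro ω hω
  by_cases hX : X ω < t ^ (1 / q)
  · have hY := (Real.rpow_inv_lt_iff_of_pos ht (by linarith [hY ω]) hp).mpr hω
    exact Or.inl ⟨by rw [one_div]; linarith, hX⟩
  · rw [not_lt, one_div] at hX
    exact Or.inr <| (Real.rpow_inv_le_iff_of_pos ht ((Real.rpow_nonneg ht _).trans hX) hq).mp hX

theorem tail_splitting_moment_general
    {Ω : Type*} [MeasurableSpace Ω] (P : Measure Ω) [IsProbabilityMeasure P]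
    (X Y : Ω → ℝ) (hXmeas : Measurable X) (hYmeas : Measurable Y)
    (hYnonneg : ∀ ω, 0 ≤ Y ω)
    (δ α ε β : ℝ) (hα : 0 < α) (hδ : α < δ)
    (hε : ε = (1 + δ) / (1 + α) - 1) (hβ : 1 < β)
    (hXmom : (∫⁻ ω, ENNReal.ofReal (X ω ^ (1 + δ)) ∂P) < ⊤)
    (htail : ∃ n₀ : ℕ, ∀ n : ℕ, n₀ ≤ n →
      P {ω | 2 * (n : ℝ) ^ ((1 : ℝ) / (1 + ε)) ≤ Y ω ∧ X ω < (n : ℝ) ^ ((1 : ℝ) / (1 + δ))}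
        ≤ ENNReal.ofReal ((n : ℝ) ^ (-β))) :
    (∫⁻ ω, ENNReal.ofReal (Y ω ^ (1 + ε)) ∂P) < ⊤ := by
  obtain ⟨n₀, htail⟩ := htail
  have hq : 0 < 1 + δ := by linarith
  have hp : 0 < 1 + ε := by rw [hε, add_sub_cancel]; exact div_pos hq (by linarith)
  set A : ℕ → Set Ω := fun n =>
    {ω | 2 * (n : ℝ) ^ ((1 : ℝ) / (1 + ε)) ≤ Y ω ∧ X ω < (n : ℝ) ^ ((1 : ℝ) / (1 + δ))}
  have hA : ∑' n, P (A n) ≠ ∞ :=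
    ENNReal.tsum_ne_top_of_eventually_le (fun n => measure_ne_top P (A n))
      (eventually_atTop.mpr ⟨n₀, htail⟩) (tsum_ofReal_natCast_rpow_neg_ne_top hβ)
  have hX : ∑' n : ℕ, P {ω | (n : ℝ) ≤ X ω ^ (1 + δ)} ≠ ∞ :=
    ne_top_of_le_ne_top (ENNReal.add_ne_top.mpr ⟨hXmom.ne, measure_ne_top P _⟩)
      (tsum_measure_le_le_lintegral_ofReal_add P (hXmeas.pow_const _))
  have hhalf (ω : Ω) : ENNReal.ofReal (Y ω ^ (1 + ε))
      = ENNReal.ofReal (2 ^ (1 + ε)) * ENNReal.ofReal ((Y ω / 2) ^ (1 + ε)) := by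
    rw [← ENNReal.ofReal_mul (by positivity),
      ← Real.mul_rpow zero_le_two (by linarith [hYnonneg ω]), mul_div_cancel₀ _ two_ne_zero]
  simp_rw [hhalf]
  rw [lintegral_const_mul' _ _ ENNReal.ofReal_ne_top]
  refine ENNReal.mul_lt_top ENNReal.ofReal_lt_top ?_
  calc ∫⁻ ω, ENNReal.ofReal ((Y ω / 2) ^ (1 + ε)) ∂P
      ≤ ∑' n : ℕ, P {ω | (n : ℝ) < (Y ω / 2) ^ (1 + ε)} :=
        lintegral_ofReal_le_tsum_measure_lt P ((hYmeas.div_const 2).pow_const _)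
    _ ≤ ∑' n : ℕ, (P (A n) + P {ω | (n : ℝ) ≤ X ω ^ (1 + δ)}) :=
        ENNReal.tsum_le_tsum fun n => (measure_mono <| setOf_lt_half_rpow_subset_union X Y
          hYnonneg hp hq n.cast_nonneg).trans (measure_union_le _ _)
    _ = ∑' n, P (A n) + ∑' n : ℕ, P {ω | (n : ℝ) ≤ X ω ^ (1 + δ)} := ENNReal.tsum_add
    _ < ∞ := ENNReal.add_lt_top.mpr ⟨hA.lt_top, hX.lt_top⟩

/-- Tail-splitting moment lemma: let `X, Y ≥ 0` be random variables,
`δ > α > 0`, `ε = (1+δ)/(1+α) - 1`, `β > 1`.  If `E[X^{1+δ}] < ∞` and for all large `n`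
`P(Y ≥ 2 n^{1/(1+ε)} and X < n^{1/(1+δ)}) ≤ n^{-β}`, then `E[Y^{1+ε}] < ∞`. -/
theorem tail_splitting_moment
    {Ω : Type*} [MeasurableSpace Ω] (P : Measure Ω) [IsProbabilityMeasure P]
    (X Y : Ω → ℝ) (hXmeas : Measurable X) (hYmeas : Measurable Y)
    (hXnonneg : ∀ ω, 0 ≤ X ω) (hYnonneg : ∀ ω, 0 ≤ Y ω)
    (δ α ε β : ℝ) (hα : 0 < α) (hδ : α < δ)
    (hε : ε = (1 + δ) / (1 + α) - 1) (hβ : 1 < β)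
    (hXmom : (∫⁻ ω, ENNReal.ofReal (X ω ^ (1 + δ)) ∂P) < ⊤)
    (htail : ∃ n₀ : ℕ, ∀ n : ℕ, n₀ ≤ n →
      P {ω | 2 * (n : ℝ) ^ ((1 : ℝ) / (1 + ε)) ≤ Y ω ∧ X ω < (n : ℝ) ^ ((1 : ℝ) / (1 + δ))}
        ≤ ENNReal.ofReal ((n : ℝ) ^ (-β))) :
    (∫⁻ ω, ENNReal.ofReal (Y ω ^ (1 + ε)) ∂P) < ⊤ :=
  tail_splitting_moment_general P X Y hXmeas hYmeas hYnonneg δ α ε β hα hδ hε hβ hXmom htail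
end
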